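/- For N ≥ 1, r_2(N) = 4(d_1(N) − d_3(N)), where d_1(N) and d_3(N) are the numbers of divisors of N congruent to 1 and 3 mod 4, respectively (Jacobi's two-square theorem). -/

import Mathlib

noncomputable def sumSqRep (n N : ℕ) : ℕ := Nat.card {x : Fin n → ℤ // ∑ i, (x i) ^ 2 = (N : ℤ)}

open Zsqrtd EuclideanDomain Finset

namespace Jacobi2Sq

local notation "ℤi" => GaussianInt


lemma norm_one_cases {u : ℤi} (h : IsUnit u) :
    u = 1 ∨ u = -1 ∨ u = ⟨0,1⟩ ∨ u = ⟨0,-1⟩ := by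
  have h1 : u.norm = 1 := (Zsqrtd.norm_eq_one_iff' (by norm_num) u).2 h
  rw [Zsqrtd.norm_def] at h1
  have h2 : u.re * u.re + u.im * u.im = 1 := by linarith
  have hre : -1 ≤ u.re ∧ u.re ≤ 1 := by constructor <;> nlinarith [mul_self_nonneg u.im]
  have him : -1 ≤ u.im ∧ u.im ≤ 1 := by constructor <;> nlinarith [mul_self_nonneg u.re]
  have e1 : -1 ≤ u.re := hre.1
  have e2 : u.re ≤ 1 := hre.2
  have e3 : -1 ≤ u.im := him.1
  have e4 : u.im ≤ 1 := him.2
  simp only [Zsqrtd.ext_iff, Zsqrtd.re_one, Zsqrtd.im_one, Zsqrtd.re_neg, Zsqrtd.im_neg]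
  interval_cases h : u.re <;> interval_cases h' : u.im <;> simp_all

lemma quad_mul_i (w : ℤi) : w * ⟨0,1⟩ = ⟨-w.im, w.re⟩ := by
  simp [Zsqrtd.ext_iff, Zsqrtd.re_mul, Zsqrtd.im_mul]

lemma quad_mul_negi (w : ℤi) : w * ⟨0,-1⟩ = ⟨w.im, -w.re⟩ := by
  simp [Zsqrtd.ext_iff, Zsqrtd.re_mul, Zsqrtd.im_mul]

def InQuad (z : ℤi) : Prop := 0 < z.re ∧ 0 ≤ z.im

lemma quad_unique {w w' : ℤi} (h : Associated w w') (hw : InQuad w) (hw' : InQuad w') :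
    w = w' := by
  obtain ⟨u, hu⟩ := h
  rcases norm_one_cases u.isUnit with h1 | h1 | h1 | h1 <;> rw [h1] at hu <;>
    rw [← hu] at hw' ⊢
  · simp
  · exfalso; obtain ⟨a, _⟩ := hw; obtain ⟨b, _⟩ := hw'
    simp only [Zsqrtd.re_neg, mul_neg_one] at b
    omega
  · exfalso
    rw [quad_mul_i] at hw'
    obtain ⟨_, a⟩ := hw; obtain ⟨b, _⟩ := hw'
    simp only at b; omega
  · exfalso
    rw [quad_mul_negi] at hw'
    obtain ⟨a, _⟩ := hw; obtain ⟨_, b⟩ := hw'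
    simp only at b; omega

lemma isUnit_i : IsUnit (⟨0,1⟩ : ℤi) := by
  rw [← Zsqrtd.norm_eq_one_iff' (by norm_num)]
  simp [Zsqrtd.norm_def]

lemma isUnit_negi : IsUnit (⟨0,-1⟩ : ℤi) := by
  rw [← Zsqrtd.norm_eq_one_iff' (by norm_num)]
  simp [Zsqrtd.norm_def]

lemma exists_quad {z : ℤi} (hz : z ≠ 0) : ∃ w, Associated z w ∧ InQuad w := by
  have hne : z.re ≠ 0 ∨ z.im ≠ 0 := by
    by_contra h; push_neg at h; exact hz (Zsqrtd.ext_iff.2 ⟨h.1, h.2⟩)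
  rcases lt_trichotomy z.re 0 with h1 | h1 | h1
  · rcases le_or_gt z.im 0 with h2 | h2
    · exact ⟨-z, (Associated.refl z).neg_right, by constructor <;> simp <;> omega⟩
    · exact ⟨z * ⟨0,-1⟩, associated_mul_unit_right z _ isUnit_negi,
        by rw [quad_mul_negi]; constructor <;> simp <;> omega⟩
  · rcases lt_trichotomy z.im 0 with h2 | h2 | h2
    · exact ⟨z * ⟨0,1⟩, associated_mul_unit_right z _ isUnit_i,
        by rw [quad_mul_i]; constructor <;> simp <;> omega⟩
    · omega
    · exact ⟨z * ⟨0,-1⟩, associated_mul_unit_right z _ isUnit_negi,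
        by rw [quad_mul_negi]; constructor <;> simp <;> omega⟩
  · rcases le_or_gt 0 z.im with h2 | h2
    · exact ⟨z, Associated.refl z, h1, h2⟩
    · exact ⟨z * ⟨0,1⟩, associated_mul_unit_right z _ isUnit_i,
        by rw [quad_mul_i]; constructor <;> simp <;> omega⟩



noncomputable def rep (z : ℤi) : ℤi :=
  if h : z = 0 then 0 else Classical.choose (exists_quad h)

lemma rep_spec {z : ℤi} (h : z ≠ 0) : Associated z (rep z) ∧ InQuad (rep z) := by
  rw [rep, dif_neg h]; exact Classical.choose_spec (exists_quad h)

lemma assoc_norm {a b : ℤi} (h : Associated a b) : a.norm = b.norm := by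
  obtain ⟨u, hu⟩ := h
  rw [← hu, Zsqrtd.norm_mul, (Zsqrtd.norm_eq_one_iff' (by norm_num) _).2 u.isUnit, mul_one]

lemma rep_norm {z : ℤi} (h : z ≠ 0) : (rep z).norm = z.norm :=
  (assoc_norm (rep_spec h).1).symm

lemma rep_ne_zero {z : ℤi} (h : z ≠ 0) : rep z ≠ 0 :=
  fun h0 => h ((associated_zero_iff_eq_zero z).1 (h0 ▸ (rep_spec h).1))

lemma rep_eq_self {z : ℤi} (h : z ≠ 0) (hq : InQuad z) : rep z = z :=
  quad_unique (rep_spec h).1.symm (rep_spec h).2 hq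

lemma rep_eq_of_assoc {z w : ℤi} (hz : z ≠ 0) (hw : w ≠ 0) (h : Associated z w) :
    rep z = rep w :=
  quad_unique (((rep_spec hz).1.symm.trans h).trans (rep_spec hw).1)
    (rep_spec hz).2 (rep_spec hw).2

def Q (N : ℕ) := {z : ℤi // z.norm = (N : ℤ) ∧ InQuad z}

noncomputable def q (N : ℕ) : ℕ := Nat.card (Q N)

lemma i_pow_cases (u : ℤi) (hu : IsUnit u) : ∃ k : Fin 4, u = (⟨0,1⟩ : ℤi) ^ (k : ℕ) := by
  rcases norm_one_cases hu with h | h | h | h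
  · exact ⟨0, by simp [h]⟩
  · exact ⟨2, by rw [h]; decide⟩
  · exact ⟨1, by rw [h]; decide⟩
  · exact ⟨3, by rw [h]; decide⟩

lemma isUnit_i' : IsUnit ((⟨0,1⟩ : ℤi)) := by
  rw [← Zsqrtd.norm_eq_one_iff' (by norm_num)]; simp [Zsqrtd.norm_def]

lemma norm_i_pow (k : ℕ) : ((⟨0,1⟩ : ℤi) ^ k).norm = 1 := by
  induction k with
  | zero => simp
  | succ n ih => rw [pow_succ, Zsqrtd.norm_mul, ih, one_mul]; simp [Zsqrtd.norm_def]

lemma card_norm_eq (N : ℕ) (hN : 1 ≤ N) :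
    Nat.card {z : ℤi // z.norm = (N : ℤ)} = 4 * q N := by
  have key : Function.Bijective
      (fun p : Fin 4 × Q N => (⟨p.2.1 * (⟨0,1⟩:ℤi) ^ (p.1 : ℕ), by
        rw [Zsqrtd.norm_mul, norm_i_pow, mul_one]; exact p.2.2.1⟩ :
        {z : ℤi // z.norm = (N : ℤ)})) := by
    constructor
    · rintro ⟨k, w, hw⟩ ⟨k', w', hw'⟩ h
      simp only [Subtype.mk_eq_mk] at h
      have hwne : w ≠ 0 := by
        intro h0; rw [h0, Zsqrtd.norm_zero] at hw
        have := hw.1.symm; rw [Int.natCast_eq_zero] at this; omega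
      have hassoc : Associated w w' := by
        have a1 : Associated w (w * (⟨0,1⟩:ℤi) ^ (k : ℕ)) :=
          associated_mul_unit_right w _ (isUnit_i'.pow _)
        have a2 : Associated w' (w' * (⟨0,1⟩:ℤi) ^ (k' : ℕ)) :=
          associated_mul_unit_right w' _ (isUnit_i'.pow _)
        rw [← h] at a2
        exact a1.trans a2.symm
      have hww : w = w' := quad_unique hassoc hw.2 hw'.2
      subst hww
      have : ((⟨0,1⟩:ℤi)) ^ (k : ℕ) = (⟨0,1⟩:ℤi) ^ (k' : ℕ) :=
        mul_left_cancel₀ hwne h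
      have hkk : k = k' := by
        fin_cases k <;> fin_cases k' <;> first | rfl | (exfalso; revert this; decide)
      simp [hkk]
    · rintro ⟨z, hz⟩
      have hzne : z ≠ 0 := by
        intro h0; rw [h0, Zsqrtd.norm_zero] at hz
        have := hz.symm; rw [Int.natCast_eq_zero] at this; omega
      obtain ⟨hassoc, hquad⟩ := rep_spec hzne
      obtain ⟨u, hu⟩ := hassoc.symm
      obtain ⟨k, hk⟩ := i_pow_cases (u : ℤi) u.isUnit
      refine ⟨⟨k, ⟨rep z, ?_, hquad⟩⟩, ?_⟩
      · rw [rep_norm hzne]; exact hz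
      · simp only [Subtype.mk_eq_mk]
        rw [← hk, hu]
  have := Nat.card_eq_of_bijective _ key
  rw [← this, Nat.card_prod, Nat.card_eq_fintype_card, Fintype.card_fin, q]



lemma bridge (N : ℕ) :
    Nat.card {x : Fin 2 → ℤ // ∑ i, (x i) ^ 2 = (N : ℤ)} =
    Nat.card {z : ℤi // z.norm = (N : ℤ)} := by
  refine Nat.card_congr ⟨fun x => ⟨⟨x.1 0, x.1 1⟩, ?_⟩, fun z => ⟨![z.1.re, z.1.im], ?_⟩, ?_, ?_⟩
  · have := x.2
    rw [Fin.sum_univ_two] at this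
    rw [Zsqrtd.norm_def]; ring_nf; ring_nf at this; linarith
  · have := z.2
    rw [Zsqrtd.norm_def] at this
    rw [Fin.sum_univ_two]; simp only [Matrix.cons_val_zero, Matrix.cons_val_one, Matrix.head_cons]
    ring_nf; ring_nf at this; linarith
  · rintro ⟨x, hx⟩
    ext i
    fin_cases i <;> simp
  · rintro ⟨z, hz⟩
    simp [Zsqrtd.ext_iff]



lemma star_dvd_star' {a b : ℤi} (h : a ∣ b) : star a ∣ star b := by
  obtain ⟨c, hc⟩ := h; exact ⟨star c, by rw [hc, star_mul']⟩

lemma star_gcd_assoc (a b : ℤi) :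
    Associated (star (gcd a b)) (gcd (star a) (star b)) := by
  apply associated_of_dvd_dvd
  · exact EuclideanDomain.dvd_gcd (star_dvd_star' (gcd_dvd_left a b)) (star_dvd_star' (gcd_dvd_right a b))
  · have h1 : star (gcd (star a) (star b)) ∣ gcd a b := by
      apply EuclideanDomain.dvd_gcd
      · simpa using star_dvd_star' (gcd_dvd_left (star a) (star b))
      · simpa using star_dvd_star' (gcd_dvd_right (star a) (star b))
    simpa using star_dvd_star' h1

lemma assoc_norm' {a b : ℤi} (h : Associated a b) : a.norm = b.norm := by
  obtain ⟨u, hu⟩ := h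
  rw [← hu, Zsqrtd.norm_mul, (Zsqrtd.norm_eq_one_iff' (by norm_num) _).2 u.isUnit, mul_one]

lemma norm_gcd_eq {m n : ℕ} (hmn : Nat.Coprime m n) {z : ℤi}
    (hz : z.norm = ((m : ℤ) * (n : ℤ))) : (gcd z (m : ℤi)).norm = (m : ℤ) := by
  set u := gcd z (m : ℤi) with hu_def
  set v := gcd (star z) (m : ℤi) with hv_def
  have hzz : z * star z = (m : ℤi) * (n : ℤi) := by
    rw [← Zsqrtd.norm_eq_mul_conj, hz]; push_cast; ring
  have hustar : Associated (star u) v := by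
    have := star_gcd_assoc z ((m : ℤ) : ℤi)
    simp only [star_intCast] at this
    convert this using 2 <;> push_cast <;> ring
  have hu := gcd_eq_gcd_ab z ((m:ℕ) : ℤi)
  have hv := gcd_eq_gcd_ab (star z) ((m:ℕ) : ℤi)
  have h1 : ((m:ℕ) : ℤi) ∣ u * v := by
    refine ⟨(n : ℤi) * gcdA z (m:ℤi) * gcdA (star z) (m:ℤi)
      + z * gcdA z (m:ℤi) * gcdB (star z) (m:ℤi)
      + star z * gcdA (star z) (m:ℤi) * gcdB z (m:ℤi)
      + (m:ℤi) * gcdB z (m:ℤi) * gcdB (star z) (m:ℤi), ?_⟩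
    rw [hu_def, hv_def, hu, hv]
    linear_combination (gcdA z ((m:ℕ):ℤi) * gcdA (star z) ((m:ℕ):ℤi)) * hzz
  have h2 : u * v ∣ ((m:ℕ) : ℤi) * ((m:ℕ) : ℤi) :=
    mul_dvd_mul (gcd_dvd_right _ _) (gcd_dvd_right _ _)
  have h3 : u * v ∣ ((m:ℕ) : ℤi) * ((n:ℕ) : ℤi) := by
    rw [← hzz]; exact mul_dvd_mul (gcd_dvd_left _ _) (gcd_dvd_left _ _)
  have hcop : IsCoprime ((m:ℕ) : ℤi) ((n:ℕ) : ℤi) := by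
    have h := (Nat.isCoprime_iff_coprime.mpr hmn)
    have := h.map (Int.castRingHom ℤi)
    simpa using this
  obtain ⟨x, y, hxy⟩ := hcop
  have h4 : u * v ∣ ((m:ℕ) : ℤi) := by
    have key : ((m:ℕ) : ℤi) = x * ((m:ℤi) * (m:ℤi)) + y * ((m:ℤi) * (n:ℤi)) := by
      linear_combination ((m:ℕ) : ℤi) * hxy.symm
    rw [key]
    exact dvd_add (Dvd.dvd.mul_left h2 x) (Dvd.dvd.mul_left h3 y)
  have hassoc : Associated (u * star u) (u * v) := Associated.mul_left u hustar
  have hfinal : Associated ((u.norm : ℤ) : ℤi) ((m:ℕ) : ℤi) := by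
    rw [Zsqrtd.norm_eq_mul_conj]
    exact associated_of_dvd_dvd (hassoc.dvd.trans h4) (h1.trans hassoc.symm.dvd)
  have hn := assoc_norm' hfinal
  rw [Zsqrtd.norm_intCast, Zsqrtd.norm_natCast] at hn
  have h5 : 0 ≤ u.norm := Zsqrtd.norm_nonneg (by norm_num) u
  nlinarith [hn, h5, Int.natCast_nonneg m]



lemma ne_zero_of_norm_pos {z : ℤi} {N : ℕ} (hN : 1 ≤ N) (h : z.norm = (N : ℤ)) : z ≠ 0 := by
  intro h0; rw [h0, Zsqrtd.norm_zero] at h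
  have := h.symm; rw [Int.natCast_eq_zero] at this; omega

lemma assoc_of_dvd_norm_eq {a b : ℤi} (h : a ∣ b) (hn : a.norm = b.norm) (ha : a ≠ 0) :
    Associated a b := by
  obtain ⟨c, rfl⟩ := h
  rw [Zsqrtd.norm_mul] at hn
  have hna : a.norm ≠ 0 := fun h0 => ha (GaussianInt.norm_eq_zero.1 h0)
  have hc : c.norm = 1 := (mul_eq_left₀ hna).mp hn.symm
  exact associated_mul_unit_right a c ((Zsqrtd.norm_eq_one_iff' (by norm_num) c).1 hc)

lemma gcd_congr_left {z z' : ℤi} (h : Associated z z') (m : ℤi) :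
    Associated (gcd z m) (gcd z' m) :=
  associated_of_dvd_dvd
    (EuclideanDomain.dvd_gcd ((gcd_dvd_left z m).trans h.dvd) (gcd_dvd_right z m))
    (EuclideanDomain.dvd_gcd ((gcd_dvd_left z' m).trans h.symm.dvd) (gcd_dvd_right z' m))

lemma assoc_gcd_of_split {m n : ℕ} (hm : 1 ≤ m) (hmn : Nat.Coprime m n) {z u w : ℤi}
    (hu : u.norm = (m : ℤ)) (hw : w.norm = (n : ℤ)) (h : Associated z (u * w)) :
    Associated u (gcd z ((m:ℕ) : ℤi)) := by
  have hz : z.norm = (m : ℤ) * (n : ℤ) := by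
    rw [assoc_norm' h, Zsqrtd.norm_mul, hu, hw]
  have hune : u ≠ 0 := ne_zero_of_norm_pos hm hu
  have h1 : u ∣ gcd z ((m:ℕ) : ℤi) := by
    apply EuclideanDomain.dvd_gcd
    · exact (Dvd.intro w rfl).trans h.symm.dvd
    · have : ((m:ℕ) : ℤi) = u * star u := by
        rw [← Zsqrtd.norm_eq_mul_conj, hu]; push_cast; ring
      exact this ▸ Dvd.intro (star u) rfl
  exact assoc_of_dvd_norm_eq h1 (by rw [hu, norm_gcd_eq hmn hz]) hune

lemma q_mul {m n : ℕ} (hm : 1 ≤ m) (hn : 1 ≤ n) (hmn : Nat.Coprime m n) :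
    q (m * n) = q m * q n := by
  have hmn1 : 1 ≤ m * n := Nat.one_le_iff_ne_zero.2 (Nat.mul_ne_zero (by omega) (by omega))
  have key : Function.Bijective (fun p : Q m × Q n =>
      (⟨rep (p.1.1 * p.2.1), by
        have h1 : p.1.1 ≠ 0 := ne_zero_of_norm_pos hm p.1.2.1
        have h2 : p.2.1 ≠ 0 := ne_zero_of_norm_pos hn p.2.2.1
        have hne : p.1.1 * p.2.1 ≠ 0 := mul_ne_zero h1 h2
        refine ⟨?_, (rep_spec hne).2⟩
        rw [rep_norm hne, Zsqrtd.norm_mul, p.1.2.1, p.2.2.1]; push_cast; ring⟩ : Q (m*n))) := by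
    constructor
    · rintro ⟨⟨u, hu, hqu⟩, ⟨w, hw, hqw⟩⟩ ⟨⟨u', hu', hqu'⟩, ⟨w', hw', hqw'⟩⟩ h
      simp only [Subtype.mk_eq_mk, Prod.mk.injEq] at h ⊢
      have h1 : u ≠ 0 := ne_zero_of_norm_pos hm hu
      have h2 : w ≠ 0 := ne_zero_of_norm_pos hn hw
      have h1' : u' ≠ 0 := ne_zero_of_norm_pos hm hu'
      have h2' : w' ≠ 0 := ne_zero_of_norm_pos hn hw'
      have hassoc : Associated (u * w) (u' * w') :=
        ((rep_spec (mul_ne_zero h1 h2)).1.trans (h ▸ (rep_spec (mul_ne_zero h1' h2')).1.symm))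
      have huu : Associated u u' := by
        have a1 := assoc_gcd_of_split hm hmn hu hw (Associated.refl (u * w))
        have a2 := assoc_gcd_of_split hm hmn hu' hw' hassoc
        exact a1.trans a2.symm
      have huu' : u = u' := quad_unique huu hqu hqu'
      subst huu'
      have hww : Associated w w' := by
        have := hassoc
        exact Associated.of_mul_left this (Associated.refl u) h1
      have hww' : w = w' := quad_unique hww hqw hqw'
      subst hww'; rfl
    · rintro ⟨z, hz, hqz⟩
      have hzne : z ≠ 0 := ne_zero_of_norm_pos hmn1 hz
      have hz' : z.norm = (m : ℤ) * (n : ℤ) := by rw [hz]; push_cast; ring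
      have hgcd : (gcd z ((m:ℕ) : ℤi)).norm = (m : ℤ) := norm_gcd_eq hmn hz'
      set u0 := gcd z ((m:ℕ) : ℤi) with hu0
      obtain ⟨w0, hw0⟩ := gcd_dvd_left z ((m:ℕ) : ℤi)
      have hu0ne : u0 ≠ 0 := ne_zero_of_norm_pos hm hgcd
      have hw0norm : w0.norm = (n : ℤ) := by
        have : z.norm = u0.norm * w0.norm := by rw [hw0, Zsqrtd.norm_mul]
        rw [hz', hgcd] at this
        have hm0 : (m : ℤ) ≠ 0 := by exact_mod_cast Nat.one_le_iff_ne_zero.1 hm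
        exact (mul_left_cancel₀ hm0 this).symm
      have hw0ne : w0 ≠ 0 := ne_zero_of_norm_pos hn hw0norm
      refine ⟨⟨⟨rep u0, by rw [rep_norm hu0ne]; exact hgcd, (rep_spec hu0ne).2⟩,
              ⟨rep w0, by rw [rep_norm hw0ne]; exact hw0norm, (rep_spec hw0ne).2⟩⟩, ?_⟩
      simp only [Subtype.mk_eq_mk]
      have hassoc : Associated (rep u0 * rep w0) z := by
        rw [hw0]
        exact Associated.mul_mul (rep_spec hu0ne).1.symm (rep_spec hw0ne).1.symm
      have hne : rep u0 * rep w0 ≠ 0 := mul_ne_zero (rep_ne_zero hu0ne) (rep_ne_zero hw0ne)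
      rw [rep_eq_of_assoc hne hzne hassoc, rep_eq_self hzne hqz]
  have hcard := Nat.card_eq_of_bijective _ key
  show Nat.card (Q (m*n)) = _
  rw [show Nat.card (Q (m*n)) = Nat.card (Q m × Q n) from hcard.symm, Nat.card_prod]; rfl




lemma norm_pow' (z : ℤi) (k : ℕ) : (z ^ k).norm = z.norm ^ k := by
  induction k with
  | zero => simp
  | succ n ih => rw [pow_succ, pow_succ, Zsqrtd.norm_mul, ih]

lemma q_eq_one_of_unique {c : ℤi} {N : ℕ} (hN : 1 ≤ N) (hc : c.norm = (N : ℤ))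
    (huniq : ∀ z : ℤi, z.norm = (N : ℤ) → Associated z c) : q N = 1 := by
  have hcne : c ≠ 0 := ne_zero_of_norm_pos hN hc
  haveI : Unique (Q N) := by
    refine ⟨⟨⟨rep c, by rw [rep_norm hcne]; exact hc, (rep_spec hcne).2⟩⟩, ?_⟩
    rintro ⟨z, hz, hqz⟩
    have hzne : z ≠ 0 := ne_zero_of_norm_pos hN hz
    exact Subtype.ext (quad_unique ((huniq z hz).trans (rep_spec hcne).1) hqz (rep_spec hcne).2)
  exact Nat.card_unique

lemma q_eq_zero {N : ℕ} (h : ∀ z : ℤi, z.norm ≠ (N : ℤ)) : q N = 0 := by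
  haveI : IsEmpty (Q N) := ⟨fun z => h z.1 z.2.1⟩
  exact Nat.card_of_isEmpty

lemma prime_of_norm {z : ℤi} {p : ℕ} (hp : p.Prime) (hz : z.norm = (p : ℤ)) : Prime z := by
  haveI : UniqueFactorizationMonoid ℤi := PrincipalIdealRing.to_uniqueFactorizationMonoid
  rw [← UniqueFactorizationMonoid.irreducible_iff_prime]
  constructor
  · intro hu
    rw [← Zsqrtd.norm_eq_one_iff' (by norm_num) z] at hu
    rw [hu] at hz
    have : p = 1 := by exact_mod_cast hz.symm
    exact hp.one_lt.ne' this
  · intro a b hab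
    have hnat : a.norm.natAbs * b.norm.natAbs = p := by
      have : (a * b).norm = (p : ℤ) := hab ▸ hz
      rw [Zsqrtd.norm_mul] at this
      rw [← Int.natAbs_mul, this, Int.natAbs_natCast]
    rcases (Nat.Prime.eq_one_or_self_of_dvd hp _ ⟨_, hnat.symm⟩) with h1 | h1
    · left; exact (Zsqrtd.norm_eq_one_iff).1 h1
    · right
      have hb : b.norm.natAbs = 1 := by
        rw [h1] at hnat
        have := hp.pos
        nlinarith [hnat]
      exact (Zsqrtd.norm_eq_one_iff).1 hb

-- p = 2 ----------------------------------------------------------------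
def pi2 : ℤi := ⟨1,1⟩

lemma norm_pi2 : pi2.norm = 2 := by simp [pi2, Zsqrtd.norm_def]

lemma prime_pi2 : Prime pi2 := prime_of_norm Nat.prime_two norm_pi2

lemma two_pow_assoc (k : ℕ) : ∀ z : ℤi, z.norm = ((2^k : ℕ) : ℤ) → Associated z (pi2 ^ k) := by
  induction k with
  | zero =>
    intro z hz
    simp only [pow_zero]
    rw [associated_one_iff_isUnit, ← Zsqrtd.norm_eq_one_iff' (by norm_num) z]
    simpa using hz
  | succ n ih =>
    intro z hz
    have hdvd : pi2 ∣ z * star z := by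
      have h1 : z * star z = ((2^(n+1) : ℕ) : ℤi) := by
        rw [← Zsqrtd.norm_eq_mul_conj, hz]; push_cast; ring
      have h2 : pi2 ∣ ((2:ℕ) : ℤi) := by
        refine ⟨star pi2, ?_⟩
        rw [← Zsqrtd.norm_eq_mul_conj, norm_pi2]; push_cast; ring
      rw [h1]
      refine h2.trans ⟨((2^n : ℕ) : ℤi), ?_⟩
      push_cast; ring
    have hpz : pi2 ∣ z := by
      rcases prime_pi2.2.2 z (star z) hdvd with h | h
      · exact h
      · obtain ⟨c, hc⟩ := h
        refine ⟨star c * ⟨0,-1⟩, ?_⟩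
        have := congrArg star hc
        rw [star_star, star_mul'] at this
        rw [this]
        have : star pi2 = pi2 * ⟨0,-1⟩ := by decide
        rw [this]; ring
    obtain ⟨w, hw⟩ := hpz
    have hwnorm : w.norm = ((2^n : ℕ) : ℤ) := by
      have : z.norm = pi2.norm * w.norm := by rw [hw, Zsqrtd.norm_mul]
      rw [hz, norm_pi2] at this
      push_cast at this ⊢
      linarith [this, pow_succ (2:ℤ) n]
    have := ih w hwnorm
    rw [hw, pow_succ, mul_comm (pi2^n) pi2]
    exact Associated.mul_left pi2 this

lemma q_two_pow (k : ℕ) : q (2^k) = 1 := by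
  refine q_eq_one_of_unique (c := pi2 ^ k) (Nat.one_le_two_pow) ?_ (two_pow_assoc k)
  rw [norm_pow', norm_pi2]; push_cast; ring

-- p % 4 = 3 ------------------------------------------------------------
section P3
variable {p : ℕ} (hp : p.Prime) (hp3 : p % 4 = 3)
include hp hp3

lemma p3_assoc : ∀ k : ℕ, ∀ z : ℤi, z.norm = ((p^k : ℕ) : ℤ) →
    ∃ j, k = 2*j ∧ Associated z (((p:ℕ) : ℤi) ^ j) := by
  haveI : Fact p.Prime := ⟨hp⟩
  have hprime : Prime ((p:ℕ) : ℤi) := GaussianInt.prime_of_nat_prime_of_mod_four_eq_three p hp3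
  intro k
  induction k using Nat.strong_induction_on with
  | _ k ih =>
  intro z hz
  match k with
  | 0 =>
    refine ⟨0, rfl, ?_⟩
    simp only [pow_zero]
    rw [associated_one_iff_isUnit, ← Zsqrtd.norm_eq_one_iff' (by norm_num) z]
    simpa using hz
  | (k+1) =>
    have hdvd : ((p:ℕ):ℤi) ∣ z * star z := by
      have h1 : z * star z = ((p^(k+1) : ℕ) : ℤi) := by
        rw [← Zsqrtd.norm_eq_mul_conj, hz]; push_cast; ring
      rw [h1]
      exact ⟨((p^k : ℕ) : ℤi), by push_cast; ring⟩
    have hpz : ((p:ℕ):ℤi) ∣ z := by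
      rcases hprime.2.2 z (star z) hdvd with h | h
      · exact h
      · obtain ⟨c, hc⟩ := h
        have := congrArg star hc
        rw [star_star, star_mul', star_natCast] at this
        exact ⟨star c, this⟩
    obtain ⟨w, hw⟩ := hpz
    have hnormp : (((p:ℕ):ℤi)).norm = ((p:ℤ))^2 := by rw [Zsqrtd.norm_natCast]; ring
    have hwnorm : (p:ℤ)^(k+1) = (p:ℤ)^2 * w.norm := by
      have : z.norm = (((p:ℕ):ℤi)).norm * w.norm := by rw [hw, Zsqrtd.norm_mul]
      rw [hz, hnormp] at this
      push_cast at this ⊢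
      linarith
    match k with
    | 0 =>
      exfalso
      have hppos : (0:ℤ) < p := by exact_mod_cast hp.pos
      have h1 : (1:ℤ) = (p:ℤ) * w.norm := by
        have hp0 : (p:ℤ) ≠ 0 := hppos.ne'
        apply mul_left_cancel₀ hp0
        linear_combination hwnorm
      have : (p:ℤ) ∣ 1 := ⟨w.norm, h1⟩
      have := Int.le_of_dvd one_pos this
      omega
    | (k+1) =>
      have hwnorm' : w.norm = ((p^k : ℕ) : ℤ) := by
        have hppos : (0:ℤ) < p := by exact_mod_cast hp.pos
        have h2 : (p:ℤ)^(k+2) = (p:ℤ)^2 * (p:ℤ)^k := by ring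
        push_cast
        nlinarith [hwnorm, pow_pos hppos k, pow_pos hppos 2]
      obtain ⟨j, hj, hassoc⟩ := ih k (by omega) w hwnorm'
      refine ⟨j+1, by omega, ?_⟩
      rw [hw, pow_succ, mul_comm (_^j) _]
      exact Associated.mul_left _ hassoc

lemma q_p3_even (j : ℕ) : q (p^(2*j)) = 1 := by
  refine q_eq_one_of_unique (c := ((p:ℕ):ℤi) ^ j) (Nat.one_le_iff_ne_zero.2 (pow_ne_zero _ hp.pos.ne')) ?_ ?_
  · rw [norm_pow', Zsqrtd.norm_natCast]; push_cast; ring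
  · intro z hz
    obtain ⟨j', hj', hassoc⟩ := p3_assoc hp hp3 (2*j) z hz
    have : j' = j := by omega
    rwa [this] at hassoc

lemma q_p3_odd (j : ℕ) : q (p^(2*j+1)) = 0 := by
  refine q_eq_zero ?_
  intro z hz
  obtain ⟨j', hj', _⟩ := p3_assoc hp hp3 (2*j+1) z hz
  omega

end P3




section P1
variable {p : ℕ} (hp : p.Prime) (hp1 : p % 4 = 1)

include hp hp1 in
lemma exists_pi : ∃ π : ℤi, π.norm = (p : ℤ) ∧ ¬ Associated π (star π) := by
  haveI : Fact p.Prime := ⟨hp⟩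
  obtain ⟨a, b, hab⟩ := Nat.Prime.sq_add_sq (p := p) (by omega)
  refine ⟨⟨(a:ℤ), (b:ℤ)⟩, ?_, ?_⟩
  · rw [Zsqrtd.norm_def]; push_cast; nlinarith [hab]
  · rintro ⟨u, hu⟩
    have hsq : ∀ c : ℕ, p ≠ c * c := by
      intro c hc
      rcases hp.eq_one_or_self_of_dvd c ⟨c, hc⟩ with h | h
      · subst h; have := hp.one_lt; omega
      · subst h; have := hp.one_lt; nlinarith
    rw [Zsqrtd.star_mk] at hu
    rcases norm_one_cases u.isUnit with h | h | h | h <;> rw [h] at hu <;>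
        simp only [mul_one, mul_neg_one, Zsqrtd.ext_iff, Zsqrtd.re_neg, Zsqrtd.im_neg] at hu
    · -- π = star π : b = -b
      have hb : (b:ℤ) = 0 := by omega
      have hb' : b = 0 := by exact_mod_cast hb
      subst hb'
      exact hsq a (by nlinarith [hab])
    · have ha : (a:ℤ) = 0 := by omega
      have ha' : a = 0 := by exact_mod_cast ha
      subst ha'
      exact hsq b (by nlinarith [hab])
    · -- π * i = ⟨-b, a⟩ = ⟨a, -b⟩ : a = -b
      have h1 : ((⟨(a:ℤ),(b:ℤ)⟩ : ℤi) * ⟨0,1⟩) = ⟨-(b:ℤ), (a:ℤ)⟩ := by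
        simp [Zsqrtd.ext_iff, Zsqrtd.re_mul, Zsqrtd.im_mul]
      rw [h1] at hu
      simp only [Zsqrtd.ext_iff] at hu
      have : (a:ℤ) = 0 ∧ (b:ℤ) = 0 := by
        constructor <;> omega
      have ha : a = 0 := by exact_mod_cast this.1
      have hb : b = 0 := by exact_mod_cast this.2
      subst ha; subst hb; simp at hab; omega
    · have h1 : ((⟨(a:ℤ),(b:ℤ)⟩ : ℤi) * ⟨0,-1⟩) = ⟨(b:ℤ), -(a:ℤ)⟩ := by
        simp [Zsqrtd.ext_iff, Zsqrtd.re_mul, Zsqrtd.im_mul]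
      rw [h1] at hu
      simp only [Zsqrtd.ext_iff] at hu
      have hba : b = a := by exact_mod_cast hu.1
      subst hba
      have : p = 2 * (b * b) := by nlinarith [hab]
      omega

variable {π : ℤi} (hπ : π.norm = (p : ℤ))
include hp hπ

lemma p1_classify : ∀ k : ℕ, ∀ z : ℤi, z.norm = ((p^k : ℕ) : ℤ) →
    ∃ j, j ≤ k ∧ Associated z (π^j * (star π)^(k-j)) := by
  have hπp : Prime π := prime_of_norm hp hπ
  intro k
  induction k with
  | zero =>
    intro z hz
    refine ⟨0, le_refl _, ?_⟩
    simp only [pow_zero, mul_one, Nat.zero_sub]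
    rw [associated_one_iff_isUnit, ← Zsqrtd.norm_eq_one_iff' (by norm_num) z]
    simpa using hz
  | succ k ih =>
    intro z hz
    have hdvd : π ∣ z * star z := by
      have h1 : z * star z = ((p^(k+1) : ℕ) : ℤi) := by
        rw [← Zsqrtd.norm_eq_mul_conj, hz]; push_cast; ring
      have h2 : π ∣ ((p:ℕ) : ℤi) := ⟨star π, by rw [← Zsqrtd.norm_eq_mul_conj, hπ]; push_cast; ring⟩
      rw [h1]
      exact h2.trans ⟨((p^k : ℕ) : ℤi), by push_cast; ring⟩
    have hppos : (0:ℤ) < p := by exact_mod_cast hp.pos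
    rcases hπp.2.2 z (star z) hdvd with hcase | hcase
    · obtain ⟨w, hw⟩ := hcase
      have hwnorm : w.norm = ((p^k : ℕ) : ℤ) := by
        have h3 : z.norm = π.norm * w.norm := by rw [hw, Zsqrtd.norm_mul]
        rw [hz, hπ] at h3
        push_cast at h3 ⊢
        have : (p:ℤ) ^ (k+1) = p * (p:ℤ)^k := by ring
        rw [this] at h3
        exact (mul_left_cancel₀ hppos.ne' h3).symm
      obtain ⟨j, hj, hassoc⟩ := ih w hwnorm
      refine ⟨j+1, by omega, ?_⟩
      have : π^(j+1) * (star π)^(k+1-(j+1)) = π * (π^j * (star π)^(k-j)) := by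
        rw [show k+1-(j+1) = k-j from by omega]; ring
      rw [hw, this]
      exact Associated.mul_left π hassoc
    · have hcase' : star π ∣ z := by
        obtain ⟨c, hc⟩ := hcase
        have := congrArg star hc
        rw [star_star, star_mul'] at this
        exact ⟨star c, this⟩
      obtain ⟨w, hw⟩ := hcase'
      have hwnorm : w.norm = ((p^k : ℕ) : ℤ) := by
        have h3 : z.norm = (star π).norm * w.norm := by rw [hw, Zsqrtd.norm_mul]
        rw [hz, Zsqrtd.norm_conj, hπ] at h3
        push_cast at h3 ⊢
        have : (p:ℤ) ^ (k+1) = p * (p:ℤ)^k := by ring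
        rw [this] at h3
        exact (mul_left_cancel₀ hppos.ne' h3).symm
      obtain ⟨j, hj, hassoc⟩ := ih w hwnorm
      refine ⟨j, by omega, ?_⟩
      have heq : π^j * (star π)^(k+1-j) = star π * (π^j * (star π)^(k-j)) := by
        rw [show k+1-j = (k-j)+1 from by omega]; ring
      rw [hw, heq]
      exact Associated.mul_left (star π) hassoc

include hp1 in
lemma q_p1_pow (hna : ¬ Associated π (star π)) (k : ℕ) : q (p^k) = k + 1 := by
  have hπp : Prime π := prime_of_norm hp hπ
  have hπs : Prime (star π) := prime_of_norm hp (by rwa [Zsqrtd.norm_conj])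
  have hπne : π ≠ 0 := hπp.ne_zero
  have hpk1 : ∀ j : ℕ, j ≤ k → (π^j * (star π)^(k-j)).norm = ((p^k : ℕ) : ℤ) := by
    intro j hj
    rw [Zsqrtd.norm_mul, norm_pow', norm_pow', Zsqrtd.norm_conj, hπ, ← pow_add,
      show j + (k-j) = k from by omega]
    push_cast; ring
  have hne : ∀ j : ℕ, j ≤ k → (π^j * (star π)^(k-j)) ≠ 0 :=
    fun j hj => ne_zero_of_norm_pos (Nat.one_le_iff_ne_zero.2 (pow_ne_zero _ hp.pos.ne')) (hpk1 j hj)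
  have no_cross : ∀ j j' : ℕ, j < j' → j' ≤ k →
      ¬ Associated (π^j * (star π)^(k-j)) (π^j' * (star π)^(k-j')) := by
    intro j j' hjj hj'k hassoc
    have hdvd : π^j' ∣ π^j * (star π)^(k-j) :=
      (Dvd.intro _ rfl).trans hassoc.symm.dvd
    have h1 : π^j * π^(j'-j) ∣ π^j * (star π)^(k-j) := by
      rwa [← pow_add, show j + (j'-j) = j' from by omega]
    have h2 : π^(j'-j) ∣ (star π)^(k-j) :=
      (mul_dvd_mul_iff_left (pow_ne_zero j hπne)).1 h1
    have h3 : π ∣ (star π)^(k-j) :=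
      (dvd_pow_self π (by omega : j'-j ≠ 0)).trans h2
    have h4 : π ∣ star π := hπp.dvd_of_dvd_pow h3
    exact hna (hπp.irreducible.associated_of_dvd hπs.irreducible h4)
  have key : Function.Bijective (fun j : Fin (k+1) =>
      (⟨rep (π^(j:ℕ) * (star π)^(k-(j:ℕ))), by
        have hj : (j:ℕ) ≤ k := by omega
        exact ⟨by rw [rep_norm (hne _ hj)]; exact hpk1 _ hj, (rep_spec (hne _ hj)).2⟩⟩ :
        Q (p^k))) := by
    constructor
    · intro j j' h
      simp only [Subtype.mk_eq_mk] at h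
      have hj : (j:ℕ) ≤ k := by omega
      have hj' : (j':ℕ) ≤ k := by omega
      have hassoc : Associated (π^(j:ℕ) * (star π)^(k-(j:ℕ))) (π^(j':ℕ) * (star π)^(k-(j':ℕ))) :=
        (rep_spec (hne _ hj)).1.trans (h ▸ (rep_spec (hne _ hj')).1.symm)
      rcases lt_trichotomy (j:ℕ) (j':ℕ) with hlt | heq | hlt
      · exact absurd hassoc (no_cross _ _ hlt hj')
      · exact Fin.ext heq
      · exact absurd hassoc.symm (no_cross _ _ hlt hj)
    · rintro ⟨z, hz, hqz⟩
      have hzne : z ≠ 0 := ne_zero_of_norm_pos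
        (Nat.one_le_iff_ne_zero.2 (pow_ne_zero _ hp.pos.ne')) hz
      obtain ⟨j, hj, hassoc⟩ := p1_classify hp hπ k z hz
      refine ⟨⟨j, by omega⟩, ?_⟩
      simp only [Subtype.mk_eq_mk]
      rw [rep_eq_of_assoc (hne j hj) hzne hassoc.symm, rep_eq_self hzne hqz]
  have hcard := Nat.card_eq_of_bijective _ key
  show Nat.card (Q (p^k)) = k + 1
  rw [show Nat.card (Q (p^k)) = Nat.card (Fin (k+1)) from hcard.symm,
    Nat.card_eq_fintype_card, Fintype.card_fin]

end P1



def chi (d : ℕ) : ℤ := if d % 4 = 1 then 1 else if d % 4 = 3 then -1 else 0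

noncomputable def D (N : ℕ) : ℤ := ∑ d ∈ N.divisors, chi d

lemma chi_mul (a b : ℕ) : chi (a * b) = chi a * chi b := by
  have ha : a % 4 = 0 ∨ a % 4 = 1 ∨ a % 4 = 2 ∨ a % 4 = 3 := by omega
  have hb : b % 4 = 0 ∨ b % 4 = 1 ∨ b % 4 = 2 ∨ b % 4 = 3 := by omega
  have hab : (a * b) % 4 = (a % 4) * (b % 4) % 4 := by rw [Nat.mul_mod]
  rcases ha with h1|h1|h1|h1 <;> rcases hb with h2|h2|h2|h2 <;>
    simp [chi, hab, h1, h2]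

def chiA : ArithmeticFunction ℤ := ⟨chi, by simp [chi]⟩

lemma chiA_mult : chiA.IsMultiplicative :=
  ⟨by simp [chiA, ArithmeticFunction.coe_mk, chi], fun {_ _} _ => chi_mul _ _⟩

lemma D_eq_zeta_mul (N : ℕ) : D N = ((ArithmeticFunction.zeta : ArithmeticFunction ℕ) * chiA) N := by
  rw [ArithmeticFunction.coe_zeta_mul_apply]; rfl

lemma D_mult {m n : ℕ} (h : Nat.Coprime m n) : D (m * n) = D m * D n := by
  rw [D_eq_zeta_mul, D_eq_zeta_mul, D_eq_zeta_mul]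
  exact (ArithmeticFunction.isMultiplicative_zeta.natCast.mul chiA_mult).map_mul_of_coprime h

lemma D_one : D 1 = 1 := by simp [D, chi]

lemma D_two_pow (k : ℕ) : D (2 ^ k) = 1 := by
  rw [D, Nat.sum_divisors_prime_pow Nat.prime_two]
  induction k with
  | zero => simp [chi]
  | succ n ih =>
    rw [Finset.sum_range_succ, ih]
    have h2 : 2 ^ (n + 1) % 2 = 0 := by
      rw [pow_succ, mul_comm]; exact Nat.mul_mod_right 2 (2^n)
    have : chi (2 ^ (n+1)) = 0 := by
      unfold chi
      have : 2 ^ (n+1) % 4 ≠ 1 ∧ 2 ^ (n+1) % 4 ≠ 3 := by omega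
      simp [this.1, this.2]
    rw [this, add_zero]

lemma D_p1_pow {p : ℕ} (hp1 : p % 4 = 1) (hp : p.Prime) (k : ℕ) : D (p ^ k) = k + 1 := by
  rw [D, Nat.sum_divisors_prime_pow hp]
  have hchi : ∀ j : ℕ, chi (p ^ j) = 1 := by
    intro j
    have : p ^ j % 4 = 1 := by
      rw [Nat.pow_mod, hp1, one_pow]; rfl
    simp [chi, this]
  rw [Finset.sum_congr rfl (fun j _ => hchi j)]
  simp

lemma three_pow_mod (p : ℕ) (hp3 : p % 4 = 3) (j : ℕ) :
    p ^ j % 4 = if j % 2 = 0 then 1 else 3 := by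
  induction j with
  | zero => simp
  | succ n ih =>
    rw [pow_succ, Nat.mul_mod, ih, hp3]
    rcases Nat.even_or_odd n with h | h
    · have h1 : n % 2 = 0 := Nat.even_iff.1 h
      have h2 : (n+1) % 2 = 1 := by omega
      simp [h1, h2]
    · have h1 : n % 2 = 1 := Nat.odd_iff.1 h
      have h2 : (n+1) % 2 = 0 := by omega
      simp [h1, h2]

lemma D_p3_pow {p : ℕ} (hp3 : p % 4 = 3) (hp : p.Prime) (k : ℕ) :
    D (p ^ k) = if k % 2 = 0 then 1 else 0 := by
  rw [D, Nat.sum_divisors_prime_pow hp]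
  have hchi : ∀ j : ℕ, chi (p ^ j) = if j % 2 = 0 then 1 else -1 := by
    intro j
    rw [chi, three_pow_mod p hp3 j]
    by_cases h : j % 2 = 0
    · simp [h]
    · simp [h]
  rw [Finset.sum_congr rfl (fun j _ => hchi j)]
  induction k with
  | zero => simp
  | succ n ih =>
    rw [Finset.sum_range_succ, ih]
    rcases Nat.even_or_odd n with h | h
    · have h1 : n % 2 = 0 := Nat.even_iff.1 h
      have h2 : (n+1) % 2 = 1 := by omega
      simp [h1, h2]
    · have h1 : n % 2 = 1 := Nat.odd_iff.1 h
      have h2 : (n+1) % 2 = 0 := by omega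
      simp [h1, h2]

lemma D_eq_filter (N : ℕ) :
    D N = ((N.divisors.filter (fun d => d % 4 = 1)).card : ℤ)
        - ((N.divisors.filter (fun d => d % 4 = 3)).card : ℤ) := by
  have hpt : ∀ d : ℕ, chi d = (if d % 4 = 1 then (1:ℤ) else 0) - (if d % 4 = 3 then (1:ℤ) else 0) := by
    intro d
    unfold chi
    split_ifs with h1 h2 <;> simp_all <;> omega
  rw [D, Finset.sum_congr rfl (fun d _ => hpt d), Finset.sum_sub_distrib,
    Finset.sum_boole, Finset.sum_boole]



lemma q_one : q 1 = 1 := by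
  refine q_eq_one_of_unique (c := (1 : ℤi)) le_rfl (by simp) ?_
  intro z hz
  rw [associated_one_iff_isUnit, ← Zsqrtd.norm_eq_one_iff' (by norm_num) z]
  simpa using hz

lemma q_eq_D : ∀ N : ℕ, 1 ≤ N → (q N : ℤ) = D N := by
  intro N
  induction N using Nat.recOnPosPrimePosCoprime with
  | prime_pow p n hp hn =>
    intro _
    have hpp : p.Prime := hp
    have h2 := hpp.two_le
    have h4 : p = 2 ∨ p % 4 = 1 ∨ p % 4 = 3 := by
      have hd : p % 4 = 0 ∨ p % 4 = 1 ∨ p % 4 = 2 ∨ p % 4 = 3 := by omega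
      rcases hd with h | h | h | h
      · exfalso
        have : (2:ℕ) ∣ p := by omega
        rcases (hpp.eq_one_or_self_of_dvd 2 this) with h1 | h1 <;> omega
      · right; left; exact h
      · left
        have : (2:ℕ) ∣ p := by omega
        rcases (hpp.eq_one_or_self_of_dvd 2 this) with h1 | h1 <;> omega
      · right; right; exact h
    rcases h4 with h | h | h
    · subst h; rw [q_two_pow, D_two_pow]; rfl
    · obtain ⟨π, hπ, hna⟩ := exists_pi hpp h
      rw [q_p1_pow hpp h hπ hna, D_p1_pow h hpp]; push_cast; ring
    · rcases Nat.even_or_odd n with he | he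
      · obtain ⟨j, hj⟩ := he
        have hj' : n = 2 * j := by omega
        rw [hj', q_p3_even hpp h j, D_p3_pow h hpp]
        simp [Nat.mul_mod_right]
      · obtain ⟨j, hj⟩ := he
        rw [hj, q_p3_odd hpp h j, D_p3_pow h hpp]
        have : (2*j+1) % 2 = 1 := by omega
        simp [this]
  | zero => intro h; omega
  | one =>
    intro _
    rw [q_one, D_one]; rfl
  | coprime a b ha hb hab iha ihb =>
    intro _
    rw [q_mul (by omega) (by omega) hab, D_mult hab]
    push_cast
    rw [iha (by omega), ihb (by omega)]

end Jacobi2Sq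

theorem stmt15 (N : ℕ) (hN : 1 ≤ N) :
    (sumSqRep 2 N : ℤ) =
      4 * (((N.divisors.filter (fun d => d % 4 = 1)).card : ℤ)
          - ((N.divisors.filter (fun d => d % 4 = 3)).card : ℤ)) := by
  rw [← Jacobi2Sq.D_eq_filter]
  have h1 : sumSqRep 2 N = Nat.card {z : GaussianInt // z.norm = (N : ℤ)} := Jacobi2Sq.bridge N
  have h2 := Jacobi2Sq.card_norm_eq N hN
  have h3 := Jacobi2Sq.q_eq_D N hN
  calc (sumSqRep 2 N : ℤ) = ((4 * Jacobi2Sq.q N : ℕ) : ℤ) := by rw [h1, h2]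
  _ = 4 * (Jacobi2Sq.q N : ℤ) := by push_cast; ring
  _ = 4 * Jacobi2Sq.D N := by rw [h3]
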